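/- None of the algebras S(0,0,0,0,0,0), S(0,0,0,0,0,1), S(0,0,0,1,0,λ) (λ ∈ K), S(0,1,0,1,0,1) has a two-sided identity element. Consequently, every 2-dimensional endo-commutative straight algebra of rank 1 over K is non-unital. -/
import Mathlib


/-- The bilinear multiplication on K² (basis e = (1,0), f = (0,1)) with structure constants
e² = a₁e+b₁f, f² = a₂e+b₂f, ef = a₃e+b₃f, fe = a₄e+b₄f. -/
def mulG {K : Type*} [Field K] (a₁ b₁ a₂ b₂ a₃ b₃ a₄ b₄ : K)
    (x y : K × K) : K × K :=
  (x.1*y.1*a₁ + x.1*y.2*a₃ + x.2*y.1*a₄ + x.2*y.2*a₂,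
   x.1*y.1*b₁ + x.1*y.2*b₃ + x.2*y.1*b₄ + x.2*y.2*b₂)

/-- The algebra S(p,q,a,b,c,d): e² = f, f² = pe+qf, ef = ae+bf, fe = ce+df. -/
def mulS {K : Type*} [Field K] (p q a b c d : K) : K × K → K × K → K × K :=
  mulG 0 1 p q a b c d

/-- Endo-commutativity: (xy)² = x²y² for all x, y. -/
def IsEC {K : Type*} [Field K] (m : K × K → K × K → K × K) : Prop :=
  ∀ x y : K × K, m (m x y) (m x y) = m (m x x) (m y y)

/-- Straightness: some x has x, x² linearly independent. -/
def IsStraight {K : Type*} [Field K] (m : K × K → K × K → K × K) : Prop :=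
  ∃ x : K × K, LinearIndependent K ![x, m x x]

/-- The 4×2 structure matrix of the algebra with the given structure constants. -/
def structMatrix {K : Type*} [Field K] (a₁ b₁ a₂ b₂ a₃ b₃ a₄ b₄ : K) :
    Matrix (Fin 4) (Fin 2) K :=
  !![a₁, b₁; a₂, b₂; a₃, b₃; a₄, b₄]

/-- Isomorphism of algebras on K²: a bijective linear map preserving multiplication. -/
def AlgIso {K : Type*} [Field K] (m₁ m₂ : K × K → K × K → K × K) : Prop :=
  ∃ φ : (K × K) ≃ₗ[K] (K × K), ∀ u v : K × K, φ (m₁ u v) = m₂ (φ u) (φ v)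

/-- A two-sided identity for a multiplication on K². -/
def HasUnit {K : Type*} [Field K] (m : K × K → K × K → K × K) : Prop :=
  ∃ u : K × K, ∀ x : K × K, m u x = x ∧ m x u = x

/-- None of the four families of algebras has an identity; consequently every
2-dimensional endo-commutative straight algebra of rank 1 over K is non-unital. -/
theorem stmt16 {K : Type*} [Field K] :
    (¬ HasUnit (mulS (0:K) 0 0 0 0 0)) ∧
    (¬ HasUnit (mulS (0:K) 0 0 0 0 1)) ∧
    (∀ l : K, ¬ HasUnit (mulS (0:K) 0 0 1 0 l)) ∧
    (¬ HasUnit (mulS (0:K) 1 0 1 0 1)) ∧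
    (∀ a₁ b₁ a₂ b₂ a₃ b₃ a₄ b₄ : K,
      IsEC (mulG a₁ b₁ a₂ b₂ a₃ b₃ a₄ b₄) →
      IsStraight (mulG a₁ b₁ a₂ b₂ a₃ b₃ a₄ b₄) →
      (structMatrix a₁ b₁ a₂ b₂ a₃ b₃ a₄ b₄).rank = 1 →
      ¬ HasUnit (mulG a₁ b₁ a₂ b₂ a₃ b₃ a₄ b₄)) := by
  refine ⟨?_, ?_, ?_, ?_, ?_⟩
  · rintro ⟨u, hu⟩
    have := (hu (1,0)).1
    simp [mulS, mulG, Prod.ext_iff] at this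
  · rintro ⟨u, hu⟩
    have := (hu (1,0)).1
    simp [mulS, mulG, Prod.ext_iff] at this
  · intro l
    rintro ⟨u, hu⟩
    have := (hu (1,0)).1
    simp [mulS, mulG, Prod.ext_iff] at this
  · rintro ⟨u, hu⟩
    have := (hu (1,0)).1
    simp [mulS, mulG, Prod.ext_iff] at this
  · intro a₁ b₁ a₂ b₂ a₃ b₃ a₄ b₄ _ _ hrank
    rintro ⟨u, hu⟩
    have h1 := (hu (1,0)).1
    have h2 := (hu (0,1)).1
    simp [mulG, Prod.ext_iff] at h1 h2
    obtain ⟨h1a, h1b⟩ := h1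
    obtain ⟨h2a, h2b⟩ := h2
    set A : Matrix (Fin 2) (Fin 4) K := (structMatrix a₁ b₁ a₂ b₂ a₃ b₃ a₄ b₄).transpose with hA
    have hsurj : Function.Surjective A.mulVecLin := by
      intro v
      refine ⟨![v 0 * u.1, v 1 * u.2, v 1 * u.1, v 0 * u.2], ?_⟩
      funext j
      fin_cases j <;>
        simp [hA, Matrix.mulVecLin, Matrix.mulVec, dotProduct, structMatrix,
          Fin.sum_univ_succ]
      · linear_combination v 0 * h1a + v 1 * h2a
      · linear_combination v 0 * h1b + v 1 * h2b
    have ht : A.rank = 2 := by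
      rw [Matrix.rank, LinearMap.range_eq_top.mpr hsurj]
      simp
    rw [hA, Matrix.rank_transpose, hrank] at ht
    exact absurd ht (by norm_num)
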